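/- Let p₀ and p be choice models such that for every s ∈ 𝕊 with π_S(s) > 0 and every a ∈ s ∪ {0} with p₀(a|s) > 0 one has p(a|s) > 0 and log(p₀(a|s)/p(a|s)) ≤ τ, where τ > 0. Writing f(s,a) = log(p₀(a|s)/p(a|s)), for every integer k ≥ 2 it holds that Σ_{s∈𝕊} π_S(s) Σ_{a∈s∪{0}} p₀(a|s) |f(s,a)|^k ≤ (k!/2) · 2^{k-2} · 8 κ(τ) · H²(p,p₀), where κ(τ) = 2(e^{τ/2} − 1 − τ/2)/(1 − e^{-τ/2})². In particular the case k = 2 gives Σ_s π_S(s) Σ_a p₀(a|s) f(s,a)² ≤ 8κ(τ) H²(p,p₀). -/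

import Mathlib

open Finset

/-- Squared Hellinger distance between two choice models at assortment `s`. -/
noncomputable def hsq (p₁ p₂ : Finset ℕ → ℕ → ℝ) (s : Finset ℕ) : ℝ :=
  (1 / 2) * ∑ a ∈ insert 0 s, (Real.sqrt (p₁ s a) - Real.sqrt (p₂ s a)) ^ 2

/-- Generalized squared Hellinger distance. -/
noncomputable def Hsq (𝕊 : Finset (Finset ℕ)) (π : Finset ℕ → ℝ)
    (p₁ p₂ : Finset ℕ → ℕ → ℝ) : ℝ :=
  ∑ s ∈ 𝕊, π s * hsq p₁ p₂ s

/-- `p` is a choice model over the assortment family `𝕊`. -/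
def IsChoiceModel (𝕊 : Finset (Finset ℕ)) (p : Finset ℕ → ℕ → ℝ) : Prop :=
  ∀ s ∈ 𝕊, (∀ a ∈ insert 0 s, 0 ≤ p s a) ∧ ∑ a ∈ insert 0 s, p s a = 1

/-- `𝕊` is a nonempty family of nonempty assortments of items `{1,…,N}`. -/
def IsAssortmentFamily (N : ℕ) (𝕊 : Finset (Finset ℕ)) : Prop :=
  𝕊.Nonempty ∧ ∀ s ∈ 𝕊, s.Nonempty ∧ s ⊆ Finset.Icc 1 N

/-- `π` is a probability mass function on `𝕊`. -/
def IsPMF (𝕊 : Finset (Finset ℕ)) (π : Finset ℕ → ℝ) : Prop :=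
  (∀ s, 0 ≤ π s) ∧ ∑ s ∈ 𝕊, π s = 1

/-!
Write `f = log (p₀/p) = 2u`, so that `√p = √p₀ e^{-u}` and the Hellinger term of an option is
`p₀ (1 - e^{-u})²`. The factor `|u|^k / k!` is dominated by the exponential remainder
`e^{|u|} - 1 - |u|`, and the ratio `(e^{|u|} - 1 - |u|) / (1 - e^{-u})²` is at most its value at the
upper bound `u = τ/2`, which is `κ(τ)/2`. For `u ≥ 0` this ratio is the product of the nondecreasing
functions `(e^u - 1 - u)/u²` and `(u/(1 - e^{-u}))²`; for `u < 0` it is at most `1/2`, which is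
below its value at any positive point.
-/

open scoped Nat

section

open Real

lemma hasSum_exp_sub_one_sub (x : ℝ) :
    HasSum (fun n : ℕ => x ^ (n + 2) / (n + 2)!) (exp x - 1 - x) := by
  have h : HasSum (fun n : ℕ => x ^ n / n !) (exp x) := by
    rw [exp_eq_exp_ℝ]
    exact NormedSpace.expSeries_div_hasSum_exp x
  simpa [Finset.sum_range_succ, sub_sub] using (hasSum_nat_add_iff' 2).mpr h

lemma pow_div_factorial_le_exp_sub_one_sub {x : ℝ} (hx : 0 ≤ x) {k : ℕ} (hk : 2 ≤ k) :
    x ^ k / k ! ≤ exp x - 1 - x := by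
  obtain ⟨n, rfl⟩ := Nat.exists_eq_add_of_le' hk
  exact le_hasSum (hasSum_exp_sub_one_sub x) n fun j _ => by positivity

lemma sq_mul_exp_sub_one_sub_le {u t : ℝ} (hu : 0 ≤ u) (hut : u ≤ t) :
    t ^ 2 * (exp u - 1 - u) ≤ u ^ 2 * (exp t - 1 - t) := by
  refine hasSum_le (fun n => ?_) ((hasSum_exp_sub_one_sub u).mul_left _)
    ((hasSum_exp_sub_one_sub t).mul_left _)
  rw [mul_div_assoc', mul_div_assoc']
  gcongr ?_ / _
  calc t ^ 2 * u ^ (n + 2) = u ^ 2 * t ^ 2 * u ^ n := by ring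
    _ ≤ u ^ 2 * t ^ 2 * t ^ n := by gcongr
    _ = u ^ 2 * t ^ (n + 2) := by ring

lemma exp_sub_one_sub_le_sq_div_two {v : ℝ} (hv : 0 ≤ v) :
    exp v - 1 - v ≤ (exp v - 1) ^ 2 / 2 := by
  -- `e^{2v} - 1 - 2v = (e^v - 1)² + 2 (e^v - 1 - v)`, and its series dominates four times that of
  -- `e^v - 1 - v` term by term.
  have h4 : 4 * (exp v - 1 - v) ≤ exp (2 * v) - 1 - 2 * v := by
    refine hasSum_le (fun n => ?_) ((hasSum_exp_sub_one_sub v).mul_left 4)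
      (hasSum_exp_sub_one_sub (2 * v))
    rw [mul_div_assoc', mul_pow]
    gcongr ?_ / _
    have : (4 : ℝ) ≤ 2 ^ (n + 2) := by
      calc (4 : ℝ) = 2 ^ 2 := by norm_num
        _ ≤ 2 ^ (n + 2) := pow_le_pow_right₀ (by norm_num) (by omega)
    gcongr
  have hsq : exp (2 * v) = exp v ^ 2 := by exact_mod_cast exp_nat_mul v 2
  nlinarith

lemma mul_one_sub_exp_neg_le {u t : ℝ} (hu : 0 ≤ u) (hut : u ≤ t) :
    u * (1 - exp (-t)) ≤ t * (1 - exp (-u)) := by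
  rcases hu.eq_or_lt with rfl | hu
  · simp
  have h := convexOn_exp.secant_mono (Set.mem_univ 0) (Set.mem_univ (-t)) (Set.mem_univ (-u))
    (by linarith) (by linarith) (by linarith)
  rw [exp_zero, sub_zero, sub_zero, div_neg, div_neg, neg_le_neg_iff,
    div_le_div_iff₀ hu (by linarith)] at h
  linarith

lemma one_sub_exp_neg_nonneg {t : ℝ} (ht : 0 ≤ t) : 0 ≤ 1 - exp (-t) :=
  sub_nonneg.mpr (exp_le_one_iff.mpr (neg_nonpos.mpr ht))

lemma one_sub_exp_neg_sq_le {t : ℝ} (ht : 0 ≤ t) : (1 - exp (-t)) ^ 2 ≤ 2 * (exp t - 1 - t) := by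
  have hle : 1 - exp (-t) ≤ t := by linarith [one_sub_le_exp_neg t]
  have hquad := pow_div_factorial_le_exp_sub_one_sub ht le_rfl
  norm_num at hquad
  nlinarith [one_sub_exp_neg_nonneg ht]

lemma exp_abs_sub_one_sub_mul_le {u t : ℝ} (ht : 0 < t) (hut : u ≤ t) :
    (exp |u| - 1 - |u|) * (1 - exp (-t)) ^ 2 ≤ (exp t - 1 - t) * (1 - exp (-u)) ^ 2 := by
  have hrem : 0 ≤ exp t - 1 - t := by linarith [add_one_le_exp t]
  rcases le_or_gt 0 u with hu | hu
  · rw [abs_of_nonneg hu]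
    have hratio := sq_mul_exp_sub_one_sub_le hu hut
    have hchord : (u * (1 - exp (-t))) ^ 2 ≤ (t * (1 - exp (-u))) ^ 2 :=
      pow_le_pow_left₀ (mul_nonneg hu (one_sub_exp_neg_nonneg ht.le))
        (mul_one_sub_exp_neg_le hu hut) 2
    refine le_of_mul_le_mul_left ?_ (by positivity : 0 < t ^ 2)
    calc t ^ 2 * ((exp u - 1 - u) * (1 - exp (-t)) ^ 2)
        = t ^ 2 * (exp u - 1 - u) * (1 - exp (-t)) ^ 2 := by ring
      _ ≤ u ^ 2 * (exp t - 1 - t) * (1 - exp (-t)) ^ 2 := by gcongr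
      _ = (exp t - 1 - t) * (u * (1 - exp (-t))) ^ 2 := by ring
      _ ≤ (exp t - 1 - t) * (t * (1 - exp (-u))) ^ 2 := by gcongr
      _ = t ^ 2 * ((exp t - 1 - t) * (1 - exp (-u)) ^ 2) := by ring
  · rw [abs_of_neg hu]
    have hneg := exp_sub_one_sub_le_sq_div_two (neg_nonneg.mpr hu.le)
    rw [sub_sq_comm] at hneg
    calc (exp (-u) - 1 - -u) * (1 - exp (-t)) ^ 2
        ≤ (1 - exp (-u)) ^ 2 / 2 * (2 * (exp t - 1 - t)) := by
          gcongr
          exact one_sub_exp_neg_sq_le ht.le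
      _ = (exp t - 1 - t) * (1 - exp (-u)) ^ 2 := by ring

noncomputable def kappa (τ : ℝ) : ℝ :=
  2 * (exp (τ / 2) - 1 - τ / 2) / (1 - exp (-τ / 2)) ^ 2

lemma kappa_nonneg (τ : ℝ) : 0 ≤ kappa τ :=
  div_nonneg (by linarith [add_one_le_exp (τ / 2)]) (sq_nonneg _)

lemma abs_pow_mul_one_sub_exp_neg_sq_le {u t : ℝ} (ht : 0 < t) (hut : u ≤ t) {k : ℕ}
    (hk : 2 ≤ k) :
    |u| ^ k * (1 - exp (-t)) ^ 2 ≤ k ! * ((exp t - 1 - t) * (1 - exp (-u)) ^ 2) := by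
  have hmoment := pow_div_factorial_le_exp_sub_one_sub (abs_nonneg u) hk
  rw [div_le_iff₀ (by positivity)] at hmoment
  calc |u| ^ k * (1 - exp (-t)) ^ 2 ≤ (exp |u| - 1 - |u|) * k ! * (1 - exp (-t)) ^ 2 := by gcongr
    _ = k ! * ((exp |u| - 1 - |u|) * (1 - exp (-t)) ^ 2) := by ring
    _ ≤ k ! * ((exp t - 1 - t) * (1 - exp (-u)) ^ 2) :=
        mul_le_mul_of_nonneg_left (exp_abs_sub_one_sub_mul_le ht hut) (by positivity)

lemma abs_two_mul_pow_le {u τ : ℝ} (hτ : 0 < τ) (hu : 2 * u ≤ τ) {k : ℕ} (hk : 2 ≤ k) :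
    |2 * u| ^ k ≤ k ! * 2 ^ (k - 1) * kappa τ * (1 - exp (-u)) ^ 2 := by
  have hden : 0 < 1 - exp (-(τ / 2)) := sub_pos.mpr (exp_lt_one_iff.mpr (by linarith))
  have hbound := abs_pow_mul_one_sub_exp_neg_sq_le (by positivity) (by linarith : u ≤ τ / 2) hk
  rw [kappa, neg_div, abs_mul, abs_two, mul_pow, ← pow_sub_one_mul (by omega : k ≠ 0)]
  field_simp
  linarith

lemma mul_abs_log_div_pow_le {τ q₀ q : ℝ} (hτ : 0 < τ) {k : ℕ} (hk : 2 ≤ k)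
    (h : 0 < q₀ → 0 < q ∧ log (q₀ / q) ≤ τ) :
    q₀ * |log (q₀ / q)| ^ k ≤ k ! * 2 ^ (k - 1) * kappa τ * (√q - √q₀) ^ 2 := by
  rcases le_or_gt q₀ 0 with hq₀ | hq₀
  · have := kappa_nonneg τ
    exact (mul_nonpos_of_nonpos_of_nonneg hq₀ (by positivity)).trans (by positivity)
  obtain ⟨hq, hlog⟩ := h hq₀
  set u := log (q₀ / q) / 2 with hu
  have hexp : q = q₀ * exp (-u) ^ 2 := by
    rw [← exp_nat_mul, Nat.cast_ofNat, show 2 * -u = -log (q₀ / q) by ring, exp_neg,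
      exp_log (div_pos hq₀ hq), inv_div]
    field_simp
  have hhell : (√q - √q₀) ^ 2 = q₀ * (1 - exp (-u)) ^ 2 := by
    rw [hexp, sqrt_mul hq₀.le, sqrt_sq (exp_nonneg _)]
    nlinarith [sq_sqrt hq₀.le]
  rw [show log (q₀ / q) = 2 * u by ring, hhell]
  calc q₀ * |2 * u| ^ k ≤ q₀ * (k ! * 2 ^ (k - 1) * kappa τ * (1 - exp (-u)) ^ 2) := by
        gcongr
        exact abs_two_mul_pow_le hτ (by linarith) hk
    _ = _ := by ring

end

lemma sum_mul_sum_mul_abs_log_div_pow_le_Hsq {𝕊 : Finset (Finset ℕ)} {π : Finset ℕ → ℝ}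
    {p₀ p : Finset ℕ → ℕ → ℝ} {τ : ℝ} (hτ : 0 < τ) (hπ : ∀ s, 0 ≤ π s)
    (hdom : ∀ s ∈ 𝕊, 0 < π s → ∀ a ∈ insert 0 s, 0 < p₀ s a →
      0 < p s a ∧ Real.log (p₀ s a / p s a) ≤ τ) {k : ℕ} (hk : 2 ≤ k) :
    ∑ s ∈ 𝕊, π s * ∑ a ∈ insert 0 s, p₀ s a * |Real.log (p₀ s a / p s a)| ^ k ≤
      k ! * 2 ^ k * kappa τ * Hsq 𝕊 π p p₀ :=
  calc ∑ s ∈ 𝕊, π s * ∑ a ∈ insert 0 s, p₀ s a * |Real.log (p₀ s a / p s a)| ^ k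
      ≤ ∑ s ∈ 𝕊, π s * ∑ a ∈ insert 0 s,
          k ! * 2 ^ (k - 1) * kappa τ * (Real.sqrt (p s a) - Real.sqrt (p₀ s a)) ^ 2 := by
        refine sum_le_sum fun s hs => ?_
        rcases (hπ s).eq_or_lt with hzero | hpos
        · simp [← hzero]
        exact mul_le_mul_of_nonneg_left (sum_le_sum fun a ha =>
          mul_abs_log_div_pow_le hτ hk (hdom s hs hpos a ha)) hpos.le
    _ = k ! * 2 ^ k * kappa τ * Hsq 𝕊 π p p₀ := by
        rw [Hsq, mul_sum]
        refine sum_congr rfl fun s _ => ?_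
        rw [hsq, ← mul_sum, ← pow_sub_one_mul (by omega : k ≠ 0)]
        ring

theorem stmt9_general (𝕊 : Finset (Finset ℕ)) (π : Finset ℕ → ℝ)
    (p₀ p : Finset ℕ → ℕ → ℝ) (τ : ℝ) (hτ : 0 < τ)
    (hπ : IsPMF 𝕊 π)
    (hdom : ∀ s ∈ 𝕊, 0 < π s → ∀ a ∈ insert 0 s, 0 < p₀ s a →
      0 < p s a ∧ Real.log (p₀ s a / p s a) ≤ τ) :
    (∀ k : ℕ, 2 ≤ k →
      ∑ s ∈ 𝕊, π s * ∑ a ∈ insert 0 s,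
          p₀ s a * |Real.log (p₀ s a / p s a)| ^ k ≤
        ((Nat.factorial k : ℝ) / 2) * 2 ^ (k - 2) *
          (8 * (2 * (Real.exp (τ / 2) - 1 - τ / 2) / (1 - Real.exp (-τ / 2)) ^ 2) *
            Hsq 𝕊 π p p₀)) ∧
    ∑ s ∈ 𝕊, π s * ∑ a ∈ insert 0 s,
        p₀ s a * (Real.log (p₀ s a / p s a)) ^ 2 ≤
      8 * (2 * (Real.exp (τ / 2) - 1 - τ / 2) / (1 - Real.exp (-τ / 2)) ^ 2) *
        Hsq 𝕊 π p p₀ := by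
  have hmoments : ∀ k : ℕ, 2 ≤ k →
      ∑ s ∈ 𝕊, π s * ∑ a ∈ insert 0 s, p₀ s a * |Real.log (p₀ s a / p s a)| ^ k ≤
        ((k ! : ℝ) / 2) * 2 ^ (k - 2) * (8 * kappa τ * Hsq 𝕊 π p p₀) := by
    intro k hk
    obtain ⟨m, rfl⟩ := Nat.exists_eq_add_of_le' hk
    calc _ ≤ (m + 2)! * 2 ^ (m + 2) * kappa τ * Hsq 𝕊 π p p₀ :=
          sum_mul_sum_mul_abs_log_div_pow_le_Hsq hτ hπ.1 hdom hk
      _ = _ := by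
          rw [Nat.add_sub_cancel]
          ring
  exact ⟨hmoments, by simpa [sq_abs, kappa] using hmoments 2 le_rfl⟩

theorem stmt9 (N : ℕ) (𝕊 : Finset (Finset ℕ)) (π : Finset ℕ → ℝ)
    (p₀ p : Finset ℕ → ℕ → ℝ) (τ : ℝ) (hτ : 0 < τ)
    (hfam : IsAssortmentFamily N 𝕊) (hπ : IsPMF 𝕊 π)
    (hp₀ : IsChoiceModel 𝕊 p₀) (hp : IsChoiceModel 𝕊 p)
    (hdom : ∀ s ∈ 𝕊, 0 < π s → ∀ a ∈ insert 0 s, 0 < p₀ s a →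
      0 < p s a ∧ Real.log (p₀ s a / p s a) ≤ τ) :
    (∀ k : ℕ, 2 ≤ k →
      ∑ s ∈ 𝕊, π s * ∑ a ∈ insert 0 s,
          p₀ s a * |Real.log (p₀ s a / p s a)| ^ k ≤
        ((Nat.factorial k : ℝ) / 2) * 2 ^ (k - 2) *
          (8 * (2 * (Real.exp (τ / 2) - 1 - τ / 2) / (1 - Real.exp (-τ / 2)) ^ 2) *
            Hsq 𝕊 π p p₀)) ∧
    ∑ s ∈ 𝕊, π s * ∑ a ∈ insert 0 s,
        p₀ s a * (Real.log (p₀ s a / p s a)) ^ 2 ≤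
      8 * (2 * (Real.exp (τ / 2) - 1 - τ / 2) / (1 - Real.exp (-τ / 2)) ^ 2) *
        Hsq 𝕊 π p p₀ :=
  stmt9_general 𝕊 π p₀ p τ hτ hπ hdom
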